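/- arXiv:2506.01223 — 3 statements merged into one kernel-verified Lean document; each statement's English description precedes it below -/
import Mathlib

section
/- Let φ : (0,R] → ℝ be continuously differentiable with φ(r) → 0 as r → 0⁺. Then for every r ∈ (0,R], |∫₀^φ(r) |sin τ| dτ| ≤ (∫₀^r sin²(φ(s))/s² · s ds)^{1/2} · (∫₀^r (φ'(s))² · s ds)^{1/2} ≤ ½ ∫₀^r ( (φ'(s))² + sin²(φ(s))/s² ) s ds, provided the integrals are finite. -/
open Real MeasureTheory

theorem H_phi_cauchy_schwarz_bound
    (R : ℝ) (hR : 0 < R) (φ : ℝ → ℝ)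
    (hφ : ContDiffOn ℝ 1 φ (Set.Ioc 0 R))
    (hlim : Filter.Tendsto φ (nhdsWithin 0 (Set.Ioi 0)) (nhds 0))
    (hint1 : IntegrableOn (fun s => Real.sin (φ s) ^ 2 / s ^ 2 * s) (Set.Ioc 0 R))
    (hint2 : IntegrableOn (fun s => (deriv φ s) ^ 2 * s) (Set.Ioc 0 R)) :
    ∀ r : ℝ, 0 < r → r ≤ R →
      |(∫ τ in (0:ℝ)..(φ r), |Real.sin τ|)| ≤
        (∫ s in Set.Ioc (0:ℝ) r, Real.sin (φ s) ^ 2 / s ^ 2 * s) ^ (1/2 : ℝ) *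
        (∫ s in Set.Ioc (0:ℝ) r, (deriv φ s) ^ 2 * s) ^ (1/2 : ℝ) ∧
      (∫ s in Set.Ioc (0:ℝ) r, Real.sin (φ s) ^ 2 / s ^ 2 * s) ^ (1/2 : ℝ) *
        (∫ s in Set.Ioc (0:ℝ) r, (deriv φ s) ^ 2 * s) ^ (1/2 : ℝ) ≤
        (1/2) * ∫ s in Set.Ioc (0:ℝ) r,
          ((deriv φ s) ^ 2 + Real.sin (φ s) ^ 2 / s ^ 2) * s := by
  intro r hr hrR
  have hsub : Set.Ioc (0:ℝ) r ⊆ Set.Ioc 0 R := Set.Ioc_subset_Ioc_right hrR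
  set A := ∫ s in Set.Ioc (0:ℝ) r, Real.sin (φ s) ^ 2 / s ^ 2 * s with hA_def
  set B := ∫ s in Set.Ioc (0:ℝ) r, (deriv φ s) ^ 2 * s with hB_def
  have hA_int : IntegrableOn (fun s => Real.sin (φ s) ^ 2 / s ^ 2 * s) (Set.Ioc 0 r) :=
    hint1.mono_set hsub
  have hB_int : IntegrableOn (fun s => (deriv φ s) ^ 2 * s) (Set.Ioc 0 r) :=
    hint2.mono_set hsub
  have hA0 : 0 ≤ A := by
    refine setIntegral_nonneg measurableSet_Ioc fun s hs => ?_
    have h0 : (0:ℝ) ≤ s := hs.1.le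
    positivity
  have hB0 : 0 ≤ B := by
    refine setIntegral_nonneg measurableSet_Ioc fun s hs => ?_
    have h0 : (0:ℝ) ≤ s := hs.1.le
    positivity
  -- continuity of φ and of deriv φ
  have hφc : ContinuousOn φ (Set.Ioc 0 r) := hφ.continuousOn.mono hsub
  have hderiv_cont : ContinuousOn (deriv φ) (Set.Ioo 0 R) := by
    have h1 : ContinuousOn (derivWithin φ (Set.Ioc 0 R)) (Set.Ioc 0 R) :=
      hφ.continuousOn_derivWithin (uniqueDiffOn_Ioc 0 R) le_rfl
    refine (h1.mono Set.Ioo_subset_Ioc_self).congr fun s hs => ?_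
    exact (derivWithin_of_mem_nhds (Ioc_mem_nhds hs.1 hs.2)).symm
  have hdiff : ∀ s ∈ Set.Ioo (0:ℝ) R, HasDerivAt φ (deriv φ s) s := by
    intro s hs
    have hnh : Set.Ioc (0:ℝ) R ∈ nhds s := Ioc_mem_nhds hs.1 hs.2
    exact ((hφ.differentiableOn one_ne_zero).differentiableAt hnh).hasDerivAt
  -- measurability of deriv φ on Ioc 0 r
  have hrestrict : (volume : Measure ℝ).restrict (Set.Ioo 0 r)
      = (volume : Measure ℝ).restrict (Set.Ioc 0 r) :=
    Measure.restrict_congr_set Ioo_ae_eq_Ioc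
  have hd_aesm : AEStronglyMeasurable (deriv φ) ((volume : Measure ℝ).restrict (Set.Ioc 0 r)) := by
    rw [← hrestrict]
    exact ((hderiv_cont.mono (Set.Ioo_subset_Ioo le_rfl hrR)).aestronglyMeasurable
      measurableSet_Ioo)
  have hsin_aesm : AEStronglyMeasurable (fun s => |Real.sin (φ s)|)
      ((volume : Measure ℝ).restrict (Set.Ioc 0 r)) :=
    ((continuous_abs.comp Real.continuous_sin).comp_continuousOn hφc).aestronglyMeasurable
      measurableSet_Ioc
  -- the key integrand
  set f' : ℝ → ℝ := fun s => |Real.sin (φ s)| * deriv φ s with hf'_def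
  have hbound : ∀ s ∈ Set.Ioc (0:ℝ) r,
      ‖f' s‖ ≤ (1/2) * (Real.sin (φ s) ^ 2 / s ^ 2 * s + (deriv φ s) ^ 2 * s) := by
    intro s hs
    have hspos : (0:ℝ) < s := hs.1
    set a := Real.sin (φ s)
    set b := deriv φ s
    have h1 : a ^ 2 / s ^ 2 * s = a ^ 2 / s := by field_simp
    have h2 : (1:ℝ)/2 * (a ^ 2 / s + b ^ 2 * s) = (a ^ 2 + b ^ 2 * s ^ 2) / (2 * s) := by
      field_simp
    rw [hf'_def]
    simp only [Real.norm_eq_abs, abs_mul, abs_abs]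
    rw [h1, h2, le_div_iff₀ (by positivity)]
    nlinarith [sq_nonneg (|a| - |b| * s), sq_abs a, sq_abs b, abs_nonneg a, abs_nonneg b,
      mul_nonneg (abs_nonneg a) (abs_nonneg b), hspos.le]
  have hf'_int : IntegrableOn f' (Set.Ioc 0 r) := by
    refine Integrable.mono' ((hA_int.add hB_int).const_mul (1/2)) (hsin_aesm.mul hd_aesm) ?_
    exact (ae_restrict_mem measurableSet_Ioc).mono hbound
  -- the antiderivative H
  set H : ℝ → ℝ := fun y => ∫ τ in (0:ℝ)..y, |Real.sin τ| with hH_def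
  have hH : ∀ x : ℝ, HasDerivAt H |Real.sin x| x := by
    intro x
    exact intervalIntegral.integral_hasDerivAt_right
      ((continuous_abs.comp Real.continuous_sin).intervalIntegrable 0 x)
      ((continuous_abs.comp Real.continuous_sin).stronglyMeasurableAtFilter _ _)
      (continuous_abs.comp Real.continuous_sin).continuousAt
  have hHcont : Continuous H := by
    have hd : Differentiable ℝ H := fun x => (hH x).differentiableAt
    exact hd.continuous
  -- FTC identity
  have hkey : H (φ r) = ∫ s in Set.Ioc (0:ℝ) r, f' s := by
    set F : ℕ → ℝ := fun n => r / ((n : ℝ) + 1) with hF_def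
    have hFpos : ∀ n, 0 < F n := fun n => by positivity
    have hFle : ∀ n, F n ≤ r := fun n =>
      div_le_self hr.le (by exact_mod_cast le_add_of_nonneg_left (Nat.cast_nonneg n))
    have heq : ∀ n, ∫ s in Set.Ioc (F n) r, f' s = H (φ r) - H (φ (F n)) := by
      intro n
      have hIccsub : Set.Icc (F n) r ⊆ Set.Ioc 0 r := fun x hx =>
        ⟨lt_of_lt_of_le (hFpos n) hx.1, hx.2⟩
      have hcont : ContinuousOn (fun s => H (φ s)) (Set.Icc (F n) r) :=
        hHcont.comp_continuousOn (hφc.mono hIccsub)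
      have hder : ∀ s ∈ Set.Ioo (F n) r, HasDerivAt (fun s => H (φ s)) (f' s) s := by
        intro s hs
        have hsmem : s ∈ Set.Ioo (0:ℝ) R := ⟨(hFpos n).trans hs.1, hs.2.trans_le hrR⟩
        exact (hH (φ s)).comp s (hdiff s hsmem)
      have hii : IntervalIntegrable f' volume (F n) r := by
        have : IntegrableOn f' (Set.uIcc (F n) r) := by
          rw [Set.uIcc_of_le (hFle n)]
          exact hf'_int.mono_set hIccsub
        exact this.intervalIntegrable
      rw [← intervalIntegral.integral_of_le (hFle n)]
      exact intervalIntegral.integral_eq_sub_of_hasDerivAt_of_le (hFle n) hcont hder hii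
    have hUnion : (⋃ n, Set.Ioc (F n) r) = Set.Ioc (0:ℝ) r := by
      ext x
      simp only [Set.mem_iUnion, Set.mem_Ioc]
      constructor
      · rintro ⟨n, h1, h2⟩; exact ⟨(hFpos n).trans h1, h2⟩
      · rintro ⟨hx0, hxr⟩
        obtain ⟨n, hn⟩ := exists_nat_gt (r / x)
        refine ⟨n, ?_, hxr⟩
        rw [div_lt_iff₀ (by positivity)]
        have : r / x < (n : ℝ) + 1 := hn.trans (lt_add_one _)
        calc r = (r / x) * x := by field_simp
          _ < ((n : ℝ) + 1) * x := by
              exact mul_lt_mul_of_pos_right this hx0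
          _ = x * ((n : ℝ) + 1) := by ring
    have hmono : Monotone fun n => Set.Ioc (F n) r := by
      intro n m hnm
      refine Set.Ioc_subset_Ioc_left ?_
      exact div_le_div_of_nonneg_left hr.le (by positivity)
        (by exact_mod_cast Nat.add_le_add_right hnm 1)
    have htend1 : Filter.Tendsto (fun n => ∫ s in Set.Ioc (F n) r, f' s) Filter.atTop
        (nhds (∫ s in Set.Ioc (0:ℝ) r, f' s)) := by
      have := tendsto_setIntegral_of_monotone (fun n => measurableSet_Ioc) hmono
        (by rw [hUnion]; exact hf'_int)
      rwa [hUnion] at this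
    have hF0 : Filter.Tendsto F Filter.atTop (nhdsWithin 0 (Set.Ioi 0)) := by
      rw [tendsto_nhdsWithin_iff]
      constructor
      · exact Filter.Tendsto.div_atTop tendsto_const_nhds
          (Filter.tendsto_atTop_add_const_right _ 1 tendsto_natCast_atTop_atTop)
      · exact Filter.Eventually.of_forall fun n => hFpos n
    have htend2 : Filter.Tendsto (fun n => H (φ r) - H (φ (F n))) Filter.atTop
        (nhds (H (φ r))) := by
      have h1 : Filter.Tendsto (fun n => H (φ (F n))) Filter.atTop (nhds 0) := by
        have := (hHcont.continuousAt (x := 0)).tendsto.comp (hlim.comp hF0)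
        simpa [hH_def, intervalIntegral.integral_same, Function.comp_def] using this
      simpa using tendsto_const_nhds.sub h1
    exact tendsto_nhds_unique (htend2.congr fun n => (heq n).symm) htend1
  -- Cauchy-Schwarz
  set u : ℝ → ℝ := fun s => |Real.sin (φ s)| / Real.sqrt s with hu_def
  set v : ℝ → ℝ := fun s => Real.sqrt s * |deriv φ s| with hv_def
  set μ := (volume : Measure ℝ).restrict (Set.Ioc (0:ℝ) r) with hμ_def
  have hu_aesm : AEStronglyMeasurable u μ := by
    refine ContinuousOn.aestronglyMeasurable ?_ measurableSet_Ioc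
    exact ((continuous_abs.comp Real.continuous_sin).comp_continuousOn hφc).div
      Real.continuous_sqrt.continuousOn
      (fun s hs => (Real.sqrt_ne_zero'.mpr hs.1))
  have hv_aesm : AEStronglyMeasurable v μ := by
    refine Real.continuous_sqrt.aestronglyMeasurable.mul ?_
    have := hd_aesm.norm
    simpa [Real.norm_eq_abs] using this
  have husq : ∀ᵐ s ∂μ, u s ^ 2 = Real.sin (φ s) ^ 2 / s ^ 2 * s := by
    refine (ae_restrict_mem measurableSet_Ioc).mono fun s hs => ?_
    have hs0 : (0:ℝ) < s := hs.1
    rw [hu_def]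
    simp only
    rw [div_pow, sq_abs, Real.sq_sqrt hs0.le]
    field_simp
  have hvsq : ∀ᵐ s ∂μ, v s ^ 2 = (deriv φ s) ^ 2 * s := by
    refine (ae_restrict_mem measurableSet_Ioc).mono fun s hs => ?_
    have hs0 : (0:ℝ) < s := hs.1
    rw [hv_def]
    simp only
    rw [mul_pow, sq_abs, Real.sq_sqrt hs0.le]
    ring
  have hu_mem : MemLp u 2 μ := by
    rw [memLp_two_iff_integrable_sq hu_aesm]
    exact (hA_int : Integrable _ μ).congr (husq.mono fun s h => h.symm)
  have hv_mem : MemLp v 2 μ := by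
    rw [memLp_two_iff_integrable_sq hv_aesm]
    exact (hB_int : Integrable _ μ).congr (hvsq.mono fun s h => h.symm)
  have huv : ∀ᵐ s ∂μ, u s * v s = |f' s| := by
    refine (ae_restrict_mem measurableSet_Ioc).mono fun s hs => ?_
    have hs0 : Real.sqrt s ≠ 0 := Real.sqrt_ne_zero'.mpr hs.1
    rw [hu_def, hv_def, hf'_def]
    simp only [abs_mul, abs_abs]
    field_simp
  have hCS : ∫ s, u s * v s ∂μ ≤ A ^ (1/2 : ℝ) * B ^ (1/2 : ℝ) := by
    have hconj : Real.HolderConjugate 2 2 := Real.HolderConjugate.two_two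
    have hofReal : ENNReal.ofReal (2:ℝ) = 2 := by norm_num
    have hunn : 0 ≤ᵐ[μ] u := Filter.Eventually.of_forall fun s => by
      rw [hu_def]; positivity
    have hvnn : 0 ≤ᵐ[μ] v := Filter.Eventually.of_forall fun s => by
      rw [hv_def]; positivity
    have h := integral_mul_le_Lp_mul_Lq_of_nonneg (μ := μ) (f := u) (g := v) hconj
      hunn hvnn (hofReal ▸ hu_mem) (hofReal ▸ hv_mem)
    have hAu : ∫ s, u s ^ (2:ℝ) ∂μ = A := by
      rw [hA_def]
      refine integral_congr_ae ?_
      filter_upwards [husq] with s hs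
      rw [show (2:ℝ) = ((2:ℕ):ℝ) by norm_num, Real.rpow_natCast]
      exact hs
    have hBv : ∫ s, v s ^ (2:ℝ) ∂μ = B := by
      rw [hB_def]
      refine integral_congr_ae ?_
      filter_upwards [hvsq] with s hs
      rw [show (2:ℝ) = ((2:ℕ):ℝ) by norm_num, Real.rpow_natCast]
      exact hs
    rwa [hAu, hBv] at h
  have hfirst : |(∫ τ in (0:ℝ)..(φ r), |Real.sin τ|)| ≤ A ^ (1/2 : ℝ) * B ^ (1/2 : ℝ) := by
    have h1 : |(∫ τ in (0:ℝ)..(φ r), |Real.sin τ|)| = |∫ s, f' s ∂μ| := by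
      rw [← hkey]
    rw [h1]
    calc |∫ s, f' s ∂μ| ≤ ∫ s, |f' s| ∂μ := by
          simpa [Real.norm_eq_abs] using norm_integral_le_integral_norm (μ := μ) f'
      _ = ∫ s, u s * v s ∂μ := (integral_congr_ae huv).symm
      _ ≤ A ^ (1/2 : ℝ) * B ^ (1/2 : ℝ) := hCS
  refine ⟨hfirst, ?_⟩
  -- second inequality: AM-GM
  have hsum : (∫ s in Set.Ioc (0:ℝ) r, ((deriv φ s) ^ 2 + Real.sin (φ s) ^ 2 / s ^ 2) * s)
      = B + A := by
    rw [hB_def, hA_def, ← integral_add hB_int hA_int]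
    refine integral_congr_ae (Filter.Eventually.of_forall fun s => ?_)
    ring
  rw [hsum, ← Real.sqrt_eq_rpow, ← Real.sqrt_eq_rpow]
  nlinarith [sq_nonneg (Real.sqrt A - Real.sqrt B), Real.sq_sqrt hA0, Real.sq_sqrt hB0,
    Real.sqrt_nonneg A, Real.sqrt_nonneg B]
end

section
/- Let φ : (0,∞) → ℝ be C¹ with φ(r) → 0 as r → ∞ and φ(r) → 0 as r → 0⁺, and suppose ∫₀^∞ ( (φ')² + sin²φ/r² ) r dr < 4. Then |∫₀^{φ(r)} |sin τ| dτ| < 1 for every r > 0, and hence |φ(r)| < π/2 for all r > 0. -/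
open Real MeasureTheory Filter

theorem subthreshold_confinement
    (φ : ℝ → ℝ)
    (hφ : ContDiffOn ℝ 1 φ (Set.Ioi 0))
    (hlim0 : Tendsto φ (nhdsWithin 0 (Set.Ioi 0)) (nhds 0))
    (hliminf : Tendsto φ atTop (nhds 0))
    (hint : IntegrableOn
      (fun r => ((deriv φ r) ^ 2 + Real.sin (φ r) ^ 2 / r ^ 2) * r) (Set.Ioi 0))
    (henergy : ∫ r in Set.Ioi (0:ℝ),
        ((deriv φ r) ^ 2 + Real.sin (φ r) ^ 2 / r ^ 2) * r < 4) :
    ∀ r : ℝ, 0 < r →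
      |(∫ τ in (0:ℝ)..(φ r), |Real.sin τ|)| < 1 ∧ |φ r| < Real.pi / 2 := by
  set E : ℝ → ℝ := fun r => ((deriv φ r) ^ 2 + Real.sin (φ r) ^ 2 / r ^ 2) * r with hEdef
  set H : ℝ → ℝ := fun x => ∫ τ in (0:ℝ)..x, |Real.sin τ| with hHdef
  have habs : Continuous fun τ : ℝ => |Real.sin τ| := continuous_sin.abs
  have hHderiv : ∀ x, HasDerivAt H |Real.sin x| x := fun x =>
    intervalIntegral.integral_hasDerivAt_right
      (habs.intervalIntegrable _ _) (habs.stronglyMeasurableAtFilter _ _)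
      habs.continuousAt
  have hHcont : Continuous H :=
    continuous_iff_continuousAt.mpr fun x => (hHderiv x).continuousAt
  have hH0 : H 0 = 0 := intervalIntegral.integral_same
  have hEnn : ∀ r ∈ Set.Ioi (0:ℝ), 0 ≤ E r := by
    intro r hr
    have : (0:ℝ) < r := hr
    positivity
  have hφc : ContinuousOn φ (Set.Ioi 0) := hφ.continuousOn
  have hdc : ContinuousOn (deriv φ) (Set.Ioi 0) :=
    hφ.continuousOn_deriv_of_isOpen isOpen_Ioi le_rfl
  have hgc : ContinuousOn (fun r => |Real.sin (φ r)| * deriv φ r) (Set.Ioi 0) :=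
    ((continuous_sin.comp_continuousOn hφc).abs).mul hdc
  have hEc : ContinuousOn E (Set.Ioi 0) := by
    apply ContinuousOn.mul _ continuousOn_id
    apply (hdc.pow 2).add
    exact ((continuous_sin.comp_continuousOn hφc).pow 2).div
      (continuousOn_id.pow 2) (fun r hr => pow_ne_zero 2 (ne_of_gt hr))
  have hFTC : ∀ a b : ℝ, 0 < a → a ≤ b →
      H (φ b) - H (φ a) = ∫ r in a..b, |Real.sin (φ r)| * deriv φ r := by
    intro a b ha hab
    have hsub : Set.uIcc a b ⊆ Set.Ioi 0 := by
      rw [Set.uIcc_of_le hab]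
      exact fun x hx => lt_of_lt_of_le ha hx.1
    refine (intervalIntegral.integral_eq_sub_of_hasDerivAt (f := fun r => H (φ r)) (fun r hr => ?_)
      ((hgc.mono hsub).intervalIntegrable)).symm
    exact (hHderiv (φ r)).comp r
      (((hφ.differentiableOn one_ne_zero).differentiableAt
        (isOpen_Ioi.mem_nhds (hsub hr))).hasDerivAt)
  have hbound : ∀ a b : ℝ, 0 < a → a ≤ b →
      |H (φ b) - H (φ a)| ≤ (∫ r in Set.Ioc a b, E r) / 2 := by
    intro a b ha hab
    have hsub : Set.uIcc a b ⊆ Set.Ioi 0 := by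
      rw [Set.uIcc_of_le hab]
      exact fun x hx => lt_of_lt_of_le ha hx.1
    rw [hFTC a b ha hab]
    calc |∫ r in a..b, |Real.sin (φ r)| * deriv φ r|
        ≤ ∫ r in a..b, |(|Real.sin (φ r)| * deriv φ r)| :=
          intervalIntegral.abs_integral_le_integral_abs hab
      _ ≤ ∫ r in a..b, E r / 2 := by
          apply intervalIntegral.integral_mono_on hab
            ((hgc.mono hsub).abs.intervalIntegrable)
            (((hEc.mono hsub).div_const 2).intervalIntegrable)
          intro r hr
          have hr0 : (0:ℝ) < r := lt_of_lt_of_le ha hr.1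
          rw [abs_mul, abs_abs]
          have key : |Real.sin (φ r)| * |deriv φ r| * (2 * r)
              ≤ (deriv φ r) ^ 2 * r ^ 2 + Real.sin (φ r) ^ 2 := by
            nlinarith [sq_nonneg (|deriv φ r| * r - |Real.sin (φ r)|),
              sq_abs (deriv φ r), sq_abs (Real.sin (φ r)),
              abs_nonneg (deriv φ r), abs_nonneg (Real.sin (φ r)), hr0]
          have h2 : E r / 2
              = ((deriv φ r) ^ 2 * r ^ 2 + Real.sin (φ r) ^ 2) / (2 * r) := by
            simp only [hEdef]
            field_simp
          rw [h2, le_div_iff₀ (by positivity : (0:ℝ) < 2 * r)]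
          exact key
      _ = (∫ r in Set.Ioc a b, E r) / 2 := by
          rw [intervalIntegral.integral_div, intervalIntegral.integral_of_le hab]
  have hpiece : ∀ a b : ℝ, 0 < a → IntegrableOn E (Set.Ioc a b) :=
    fun a b ha => hint.mono_set (fun x hx => ha.trans hx.1)
  have hIoc_le : ∀ a b : ℝ, 0 < a →
      (∫ r in Set.Ioc a b, E r) ≤ ∫ r in Set.Ioi (0:ℝ), E r := by
    intro a b ha
    apply setIntegral_mono_set hint
    · exact (ae_restrict_iff' measurableSet_Ioi).2 (Eventually.of_forall hEnn)
    · exact HasSubset.Subset.eventuallyLE (fun x hx => ha.trans hx.1)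
  intro r0 hr0
  have hsum : ∀ a b : ℝ, 0 < a → a ≤ r0 → r0 ≤ b →
      (∫ r in Set.Ioc a r0, E r) + (∫ r in Set.Ioc r0 b, E r)
        = ∫ r in Set.Ioc a b, E r := by
    intro a b ha h1 h2
    rw [← Set.Ioc_union_Ioc_eq_Ioc h1 h2]
    exact (setIntegral_union (Set.Ioc_disjoint_Ioc_of_le le_rfl) measurableSet_Ioc
      (hpiece a r0 ha) (hpiece r0 b (ha.trans_le h1))).symm
  have hkey : ∀ a ∈ Set.Ioo (0:ℝ) r0, ∀ b : ℝ, r0 ≤ b →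
      |H (φ r0) - H (φ a)| + |H (φ b) - H (φ r0)|
        ≤ (∫ r in Set.Ioi (0:ℝ), E r) / 2 := by
    intro a ha b hb
    have h1 := hbound a r0 ha.1 ha.2.le
    have h2 := hbound r0 b hr0 hb
    have h3 := hsum a b ha.1 ha.2.le hb
    have h4 := hIoc_le a b ha.1
    linarith
  have hTop : Tendsto (fun b => H (φ b)) atTop (nhds 0) := by
    simpa [Function.comp_def, hH0] using (hHcont.tendsto 0).comp hliminf
  have hZero : Tendsto (fun a => H (φ a)) (nhdsWithin 0 (Set.Ioi 0)) (nhds 0) := by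
    simpa [Function.comp_def, hH0] using (hHcont.tendsto 0).comp hlim0
  have hkey2 : ∀ a ∈ Set.Ioo (0:ℝ) r0,
      |H (φ r0) - H (φ a)| + |H (φ r0)| ≤ (∫ r in Set.Ioi (0:ℝ), E r) / 2 := by
    intro a ha
    have hlim : Tendsto (fun b => |H (φ r0) - H (φ a)| + |H (φ b) - H (φ r0)|)
        atTop (nhds (|H (φ r0) - H (φ a)| + |H (φ r0)|)) := by
      have h1 : Tendsto (fun b => |H (φ b) - H (φ r0)|) atTop
          (nhds |0 - H (φ r0)|) := (hTop.sub tendsto_const_nhds).abs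
      have h2 : |(0:ℝ) - H (φ r0)| = |H (φ r0)| := by rw [zero_sub, abs_neg]
      rw [h2] at h1
      exact tendsto_const_nhds.add h1
    exact le_of_tendsto hlim (eventually_atTop.2 ⟨r0, fun b hb => hkey a ha b hb⟩)
  have hkey3 : 2 * |H (φ r0)| ≤ (∫ r in Set.Ioi (0:ℝ), E r) / 2 := by
    have hlim : Tendsto (fun a => |H (φ r0) - H (φ a)| + |H (φ r0)|)
        (nhdsWithin 0 (Set.Ioi 0)) (nhds (|H (φ r0)| + |H (φ r0)|)) := by
      have h1 : Tendsto (fun a => |H (φ r0) - H (φ a)|) (nhdsWithin 0 (Set.Ioi 0))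
          (nhds |H (φ r0) - 0|) := (tendsto_const_nhds.sub hZero).abs
      have h2 : |H (φ r0) - 0| = |H (φ r0)| := by rw [sub_zero]
      rw [h2] at h1
      exact h1.add tendsto_const_nhds
    have hmem : Set.Ioo (0:ℝ) r0 ∈ nhdsWithin 0 (Set.Ioi 0) :=
      Ioo_mem_nhdsGT_of_mem ⟨le_refl 0, hr0⟩
    have := le_of_tendsto hlim (Filter.eventually_iff_exists_mem.2
      ⟨Set.Ioo 0 r0, hmem, fun a ha => hkey2 a ha⟩)
    linarith
  have hmain : |H (φ r0)| < 1 := by linarith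
  refine ⟨hmain, ?_⟩
  by_contra hc
  push_neg at hc
  have hHmono : Monotone H := by
    intro x y hxy
    have hadd : H x + (∫ τ in x..y, |Real.sin τ|) = H y :=
      intervalIntegral.integral_add_adjacent_intervals
        (habs.intervalIntegrable _ _) (habs.intervalIntegrable _ _)
    have hnn : 0 ≤ ∫ τ in x..y, |Real.sin τ| :=
      intervalIntegral.integral_nonneg hxy (fun _ _ => abs_nonneg _)
    linarith
  have hodd : ∀ x : ℝ, H (-x) = -H x := by
    intro x
    have h := intervalIntegral.integral_comp_neg (a := (0:ℝ)) (b := x)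
      (fun τ => |Real.sin τ|)
    simp only [Real.sin_neg, abs_neg, neg_zero] at h
    have h2 : (∫ τ in (-x)..(0:ℝ), |Real.sin τ|) = -H (-x) := by
      rw [intervalIntegral.integral_symm]
    rw [h2] at h
    linarith [h]
  have hpi : H (π / 2) = 1 := by
    have h1 : (∫ τ in (0:ℝ)..(π / 2), |Real.sin τ|)
        = ∫ τ in (0:ℝ)..(π / 2), Real.sin τ := by
      apply intervalIntegral.integral_congr
      intro τ hτ
      rw [Set.uIcc_of_le (by positivity)] at hτ
      exact abs_of_nonneg (Real.sin_nonneg_of_nonneg_of_le_pi hτ.1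
        (hτ.2.trans (by linarith [Real.pi_pos])))
    show (∫ τ in (0:ℝ)..(π / 2), |Real.sin τ|) = 1
    rw [h1, integral_sin]
    simp
  rcases le_abs.mp hc with h | h
  · have := hHmono h
    have hle := le_abs_self (H (φ r0))
    linarith [hpi ▸ this]
  · have h1 := hHmono h
    rw [hodd] at h1
    have hle := neg_le_abs (H (φ r0))
    linarith [hpi ▸ h1]
end

section
/- Let φ_∞ : (0,∞) → ℝ be a bounded C² solution of φ'' + φ'/r − sin(φ)cos(φ)/r² = 0 with φ_∞(r) → 0 as r → 0⁺, finite energy ∫₀^∞ ((φ_∞')² + sin²(φ_∞)/r²) r dr < ∞, and |φ_∞(r)| ≤ π/2 for all r. If φ_∞ is not identically 0, then there is no such φ_∞ other than the constant 0; i.e., every finite-energy solution of the ODE with values in [−π/2, π/2] and vanishing at the origin is identically zero. -/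
open Real MeasureTheory Filter Set

lemma hm_aux (φ : ℝ → ℝ)
    (hd1 : ∀ r ∈ Set.Ioi (0:ℝ), HasDerivAt φ (deriv φ r) r)
    (hcd : ContinuousOn (deriv φ) (Set.Ioi 0))
    (hid : ∀ r ∈ Set.Ioi (0:ℝ), (r * deriv φ r)^2 = Real.sin (φ r)^2)
    (hlim0 : Tendsto φ (nhdsWithin 0 (Set.Ioi 0)) (nhds 0))
    (hconf : ∀ r : ℝ, 0 < r → |φ r| ≤ Real.pi / 2)
    (r₀ : ℝ) (hr₀ : 0 < r₀) (hpos : 0 < φ r₀) : False := by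
  have hcφ : ContinuousOn φ (Set.Ioi 0) := fun r hr =>
    (hd1 r hr).continuousAt.continuousWithinAt
  have hcη : ContinuousOn (fun r => r * deriv φ r) (Set.Ioi 0) :=
    continuousOn_id.mul hcd
  have hcos : ∀ r : ℝ, 0 < r → 0 ≤ Real.cos (φ r) := by
    intro r hr
    have h := abs_le.mp (hconf r hr)
    exact Real.cos_nonneg_of_mem_Icc ⟨h.1, h.2⟩
  have hden : ∀ r : ℝ, 0 < r → (0:ℝ) < 1 + Real.cos (φ r) := fun r hr => by
    linarith [hcos r hr]
  have hsinpos : ∀ r : ℝ, 0 < r → 0 < φ r → 0 < Real.sin (φ r) := by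
    intro r hr h
    exact Real.sin_pos_of_pos_of_lt_pi h
      (lt_of_le_of_lt (le_of_abs_le (hconf r hr)) (by linarith [Real.pi_pos]))
  set ψ : ℝ → ℝ := fun r => Real.sin (φ r) / (1 + Real.cos (φ r)) with hψdef
  have hψc : ContinuousOn ψ (Set.Ioi 0) :=
    (Real.continuous_sin.comp_continuousOn hcφ).div
      ((continuous_const.add Real.continuous_cos).comp_continuousOn hcφ)
      (fun r hr => ne_of_gt (hden r hr))
  have hψd : ∀ r ∈ Set.Ioi (0:ℝ), HasDerivAt ψ (deriv φ r / (1 + Real.cos (φ r))) r := by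
    intro r hr
    have h1 : HasDerivAt (fun x => Real.sin (φ x)) (Real.cos (φ r) * deriv φ r) r :=
      (Real.hasDerivAt_sin (φ r)).comp r (hd1 r hr)
    have h2 : HasDerivAt (fun x => 1 + Real.cos (φ x)) (0 + -Real.sin (φ r) * deriv φ r) r :=
      (hasDerivAt_const r (1:ℝ)).add ((Real.hasDerivAt_cos (φ r)).comp r (hd1 r hr))
    have h3 := h1.div h2 (ne_of_gt (hden r hr))
    have hs := Real.sin_sq_add_cos_sq (φ r)
    have h4 : (Real.cos (φ r) * deriv φ r * (1 + Real.cos (φ r))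
        - Real.sin (φ r) * (0 + -Real.sin (φ r) * deriv φ r)) / (1 + Real.cos (φ r)) ^ 2
        = deriv φ r / (1 + Real.cos (φ r)) := by
      rw [div_eq_div_iff (pow_ne_zero 2 (hden r hr).ne') (hden r hr).ne']
      linear_combination (deriv φ r * (1 + Real.cos (φ r))) * hs
    exact h4 ▸ h3
  have hψle1 : ∀ r : ℝ, 0 < r → ψ r ≤ 1 := by
    intro r hr
    rw [hψdef, div_le_one (hden r hr)]
    linarith [Real.sin_le_one (φ r), hcos r hr]
  have hψpos : ∀ r : ℝ, 0 < r → 0 < φ r → 0 < ψ r := fun r hr h =>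
    div_pos (hsinpos r hr h) (hden r hr)
  -- positivity propagation on zero-free intervals
  have possub : ∀ s t : ℝ, 0 < s → (∀ x ∈ Set.Icc s t, φ x ≠ 0) →
      ∀ x ∈ Set.Icc s t, ∀ y ∈ Set.Icc s t, 0 < φ x → 0 < φ y := by
    intro s t hs hne x hx y hy hφx
    by_contra hy'
    have hφy : φ y < 0 := lt_of_le_of_ne (not_lt.mp hy') (hne y hy)
    have hsub : Set.uIcc x y ⊆ Set.Icc s t := Set.uIcc_subset_Icc hx hy
    have hIVT := intermediate_value_uIcc
      (hcφ.mono (hsub.trans (fun z hz => lt_of_lt_of_le hs hz.1)))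
    have h0 : (0:ℝ) ∈ Set.uIcc (φ x) (φ y) := by
      rw [Set.mem_uIcc]; right; exact ⟨le_of_lt hφy, le_of_lt hφx⟩
    obtain ⟨z, hz, hz0⟩ := hIVT h0
    exact hne z (hsub hz) hz0
  -- η and sign dichotomy
  set η : ℝ → ℝ := fun r => r * deriv φ r with hηdef
  have hdich : ∀ x : ℝ, 0 < x → η x = Real.sin (φ x) ∨ η x = -Real.sin (φ x) := by
    intro x hx
    have h := hid x (Set.mem_Ioi.mpr hx)
    rcases (sq_eq_sq_iff_abs_eq_abs _ _).mp h |> abs_eq_abs.mp with h' | h'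
    · exact Or.inl h'
    · exact Or.inr h'
  -- a zero limit point of zeros is a zero
  have hzero_closure : ∀ (S : Set ℝ) (b : ℝ), 0 < b → b ∈ closure S →
      (∀ z ∈ S, φ z = 0) → φ b = 0 := by
    intro S b hb hbc hS
    have h1 : Tendsto φ (nhdsWithin b S) (nhds (φ b)) :=
      ((hd1 b (Set.mem_Ioi.mpr hb)).continuousAt).continuousWithinAt
    have hne : (nhdsWithin b S).NeBot := mem_closure_iff_nhdsWithin_neBot.mp hbc
    have h2 : Tendsto φ (nhdsWithin b S) (nhds 0) :=
      tendsto_const_nhds.congr' (eventuallyEq_nhdsWithin_of_eqOn (fun z hz => (hS z hz).symm))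
    exact tendsto_nhds_unique h1 h2
  -- sign propagation to the right
  have signR : ∀ t : ℝ, r₀ ≤ t → (∀ x ∈ Set.Icc r₀ t, 0 < φ x) →
      η r₀ = Real.sin (φ r₀) → ∀ x ∈ Set.Icc r₀ t, η x = Real.sin (φ x) := by
    intro t ht hposI hsgn x hx
    have hx0 : 0 < x := lt_of_lt_of_le hr₀ hx.1
    rcases hdich x hx0 with h | h
    · exact h
    · exfalso
      have hsx : 0 < Real.sin (φ x) := hsinpos x hx0 (hposI x hx)
      have hηx : η x < 0 := by rw [h]; linarith
      have hηr₀ : 0 < η r₀ := by rw [hsgn]; exact hsinpos r₀ hr₀ hpos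
      have hsub : Set.uIcc r₀ x ⊆ Set.Icc r₀ t := Set.uIcc_subset_Icc ⟨le_refl r₀, ht⟩ hx
      have hconη : ContinuousOn η (Set.uIcc r₀ x) :=
        hcη.mono (fun z hz => Set.mem_Ioi.mpr (lt_of_lt_of_le hr₀ (hsub hz).1))
      obtain ⟨u, hu, hu0⟩ := intermediate_value_uIcc hconη
        (show (0:ℝ) ∈ Set.uIcc (η r₀) (η x) from
          Set.mem_uIcc.mpr (Or.inr ⟨le_of_lt hηx, le_of_lt hηr₀⟩))
      have hu' : 0 < u := lt_of_lt_of_le hr₀ (hsub hu).1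
      have hidu := hid u (Set.mem_Ioi.mpr hu')
      have hsinu : 0 < Real.sin (φ u) := hsinpos u hu' (hposI u (hsub hu))
      simp only [hηdef] at hu0
      nlinarith [hidu, hsinu]
  -- sign propagation to the left
  have signL : ∀ t : ℝ, 0 < t → t ≤ r₀ → (∀ x ∈ Set.Icc t r₀, 0 < φ x) →
      η r₀ = -Real.sin (φ r₀) → ∀ x ∈ Set.Icc t r₀, η x = -Real.sin (φ x) := by
    intro t ht0 ht hposI hsgn x hx
    have hx0 : 0 < x := lt_of_lt_of_le ht0 hx.1
    rcases hdich x hx0 with h | h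
    swap
    · exact h
    · exfalso
      have hsx : 0 < Real.sin (φ x) := hsinpos x hx0 (hposI x hx)
      have hηx : 0 < η x := by rw [h]; linarith
      have hηr₀ : η r₀ < 0 := by
        rw [hsgn]; have := hsinpos r₀ hr₀ hpos; linarith
      have hsub : Set.uIcc r₀ x ⊆ Set.Icc t r₀ := Set.uIcc_subset_Icc ⟨ht, le_refl r₀⟩ hx
      have hconη : ContinuousOn η (Set.uIcc r₀ x) :=
        hcη.mono (fun z hz => Set.mem_Ioi.mpr (lt_of_lt_of_le ht0 (hsub hz).1))
      obtain ⟨u, hu, hu0⟩ := intermediate_value_uIcc hconη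
        (show (0:ℝ) ∈ Set.uIcc (η r₀) (η x) from
          Set.mem_uIcc.mpr (Or.inl ⟨le_of_lt hηr₀, le_of_lt hηx⟩))
      have hu' : 0 < u := lt_of_lt_of_le ht0 (hsub hu).1
      have hidu := hid u (Set.mem_Ioi.mpr hu')
      have hsinu : 0 < Real.sin (φ u) := hsinpos u hu' (hposI u (hsub hu))
      simp only [hηdef] at hu0
      nlinarith [hidu, hsinu]
  -- constancy of ψ r / r when sign is +
  have constR : ∀ t : ℝ, r₀ ≤ t → (∀ x ∈ Set.Icc r₀ t, 0 < φ x) →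
      η r₀ = Real.sin (φ r₀) → ψ t / t = ψ r₀ / r₀ := by
    intro t ht hposI hsgn
    have hsgnI := signR t ht hposI hsgn
    have hq : ∀ x ∈ Set.Icc r₀ t, HasDerivAt (fun r => ψ r / r) 0 x := by
      intro x hx
      have hx0 : 0 < x := lt_of_lt_of_le hr₀ hx.1
      have h1 := (hψd x (Set.mem_Ioi.mpr hx0)).div (hasDerivAt_id x) (ne_of_gt hx0)
      have hsx := hsgnI x hx
      simp only [hηdef] at hsx
      have hdx : deriv φ x = Real.sin (φ x) / x := by
        rw [eq_div_iff (ne_of_gt hx0)]; linarith [hsx]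
      convert h1 using 1
      rfl
      rfl
      rfl
      rw [hdx, hψdef]
      field_simp
      simp
    have hcont : ContinuousOn (fun r => ψ r / r) (Set.Icc r₀ t) :=
      fun x hx => ((hq x hx).continuousAt).continuousWithinAt
    have := constant_of_has_deriv_right_zero hcont
      (fun x hx => ((hq x (Set.Ico_subset_Icc_self hx)).hasDerivWithinAt)) t
      (Set.right_mem_Icc.mpr ht)
    exact this
  -- constancy of ψ r * r when sign is -
  have constL : ∀ t : ℝ, 0 < t → t ≤ r₀ → (∀ x ∈ Set.Icc t r₀, 0 < φ x) →
      η r₀ = -Real.sin (φ r₀) → ψ t * t = ψ r₀ * r₀ := by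
    intro t ht0 ht hposI hsgn
    have hsgnI := signL t ht0 ht hposI hsgn
    have hq : ∀ x ∈ Set.Icc t r₀, HasDerivAt (fun r => ψ r * r) 0 x := by
      intro x hx
      have hx0 : 0 < x := lt_of_lt_of_le ht0 hx.1
      have h1 := (hψd x (Set.mem_Ioi.mpr hx0)).mul (hasDerivAt_id x)
      have hsx := hsgnI x hx
      simp only [hηdef] at hsx
      have hdx : deriv φ x = -Real.sin (φ x) / x := by
        rw [eq_div_iff (ne_of_gt hx0)]; linarith [hsx]
      convert h1 using 1
      rfl
      rfl
      rfl
      rw [hdx, hψdef]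
      field_simp
      simp
    have hcont : ContinuousOn (fun r => ψ r * r) (Set.Icc t r₀) :=
      fun x hx => ((hq x hx).continuousAt).continuousWithinAt
    have := constant_of_has_deriv_right_zero hcont
      (fun x hx => ((hq x (Set.Ico_subset_Icc_self hx)).hasDerivWithinAt)) r₀
      (Set.right_mem_Icc.mpr ht)
    exact this.symm
  -- main case analysis
  rcases hdich r₀ hr₀ with hplus | hminus
  · -- sign +: analysis to the right
    set Z : Set ℝ := {r : ℝ | r₀ ≤ r ∧ φ r = 0} with hZdef
    have hc₁ : 0 < ψ r₀ / r₀ := div_pos (hψpos r₀ hr₀ hpos) hr₀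
    by_cases hZ : Z.Nonempty
    · set b := sInf Z with hbdef
      have hbdd : BddBelow Z := ⟨r₀, fun z hz => hz.1⟩
      have hbge : r₀ ≤ b := le_csInf hZ (fun z hz => hz.1)
      have hb0 : 0 < b := lt_of_lt_of_le hr₀ hbge
      have hφb : φ b = 0 :=
        hzero_closure Z b hb0 (csInf_mem_closure hZ hbdd) (fun z hz => hz.2)
      have hblt : r₀ < b := by
        rcases lt_or_eq_of_le hbge with h | h
        · exact h
        · exfalso; rw [← h] at hφb; exact (ne_of_gt hpos) hφb
      have hkey : ∀ t ∈ Set.Ico r₀ b, ψ t / t = ψ r₀ / r₀ := by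
        intro t ht
        have hnz : ∀ x ∈ Set.Icc r₀ t, φ x ≠ 0 := by
          intro x hx h0
          have hxZ : x ∈ Z := ⟨hx.1, h0⟩
          have := csInf_le hbdd hxZ
          linarith [hx.2, ht.2]
        have hposI : ∀ x ∈ Set.Icc r₀ t, 0 < φ x :=
          fun x hx => possub r₀ t hr₀ hnz r₀ ⟨le_refl _, ht.1⟩ x hx hpos
        exact constR t ht.1 hposI hplus
      have hbc : b ∈ closure (Set.Ico r₀ b) := by
        rw [closure_Ico (ne_of_lt hblt)]
        exact ⟨le_of_lt hblt, le_refl b⟩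
      have hne : (nhdsWithin b (Set.Ico r₀ b)).NeBot :=
        mem_closure_iff_nhdsWithin_neBot.mp hbc
      have h1 : Tendsto (fun t => ψ t / t) (nhdsWithin b (Set.Ico r₀ b)) (nhds (ψ b / b)) :=
        (((hψc.continuousAt (Ioi_mem_nhds hb0)).div continuousAt_id
          (ne_of_gt hb0))).continuousWithinAt
      have h2 : Tendsto (fun t => ψ t / t) (nhdsWithin b (Set.Ico r₀ b)) (nhds (ψ r₀ / r₀)) :=
        tendsto_const_nhds.congr' (eventuallyEq_nhdsWithin_of_eqOn (fun t ht => (hkey t ht).symm))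
      have hbeq : ψ b / b = ψ r₀ / r₀ := tendsto_nhds_unique h1 h2
      have hψb : ψ b = 0 := by rw [hψdef]; simp [hφb]
      rw [hψb, zero_div] at hbeq
      linarith [hc₁, hbeq]
    · have hnozero : ∀ x : ℝ, r₀ ≤ x → φ x ≠ 0 := by
        intro x hx h0; exact hZ ⟨x, hx, h0⟩
      set t := max r₀ (2 * r₀ / ψ r₀) with htdef
      have ht : r₀ ≤ t := le_max_left _ _
      have ht0 : 0 < t := lt_of_lt_of_le hr₀ ht
      have hposI : ∀ x ∈ Set.Icc r₀ t, 0 < φ x :=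
        fun x hx => possub r₀ t hr₀ (fun y hy h0 => hnozero y hy.1 h0)
          r₀ ⟨le_refl _, ht⟩ x hx hpos
      have hconst := constR t ht hposI hplus
      have hψt : ψ t = ψ r₀ / r₀ * t := (div_eq_iff (ne_of_gt ht0)).mp hconst
      have hsr : 0 < ψ r₀ := hψpos r₀ hr₀ hpos
      have ht2 : 2 * r₀ / ψ r₀ ≤ t := le_max_right _ _
      have h2' : ψ r₀ / r₀ * (2 * r₀ / ψ r₀) = 2 := by
        field_simp
      have hge : 2 ≤ ψ t := by
        rw [hψt, ← h2']
        have : 0 < ψ r₀ / r₀ := div_pos hsr hr₀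
        nlinarith [ht2]
      linarith [hψle1 t ht0]
  · -- sign -: analysis to the left
    set W : Set ℝ := {r : ℝ | 0 < r ∧ r ≤ r₀ ∧ φ r = 0} with hWdef
    have hc₂ : 0 < ψ r₀ * r₀ := mul_pos (hψpos r₀ hr₀ hpos) hr₀
    by_cases hW : W.Nonempty
    · set a := sSup W with hadef
      have hbddW : BddAbove W := ⟨r₀, fun z hz => hz.2.1⟩
      obtain ⟨w, hw⟩ := hW
      have haw : w ≤ a := le_csSup hbddW hw
      have ha0 : 0 < a := lt_of_lt_of_le hw.1 haw
      have hale : a ≤ r₀ := csSup_le ⟨w, hw⟩ (fun z hz => hz.2.1)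
      have hφa : φ a = 0 :=
        hzero_closure W a ha0 (csSup_mem_closure ⟨w, hw⟩ hbddW) (fun z hz => hz.2.2)
      have halt : a < r₀ := by
        rcases lt_or_eq_of_le hale with h | h
        · exact h
        · exfalso; rw [h] at hφa; exact (ne_of_gt hpos) hφa
      have hkey : ∀ t ∈ Set.Ioc a r₀, ψ t * t = ψ r₀ * r₀ := by
        intro t ht
        have hnz : ∀ x ∈ Set.Icc t r₀, φ x ≠ 0 := by
          intro x hx h0
          have hxW : x ∈ W := ⟨lt_of_lt_of_le (lt_of_lt_of_le ha0 (le_of_lt ht.1)) hx.1,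
            hx.2, h0⟩
          have := le_csSup hbddW hxW
          linarith [hx.1, ht.1]
        have ht0 : 0 < t := lt_trans ha0 ht.1
        have hposI : ∀ x ∈ Set.Icc t r₀, 0 < φ x :=
          fun x hx => possub t r₀ ht0 hnz r₀ ⟨ht.2, le_refl _⟩ x hx hpos
        exact constL t ht0 ht.2 hposI hminus
      have hac : a ∈ closure (Set.Ioc a r₀) := by
        rw [closure_Ioc (ne_of_lt halt)]
        exact ⟨le_refl a, le_of_lt halt⟩
      have hne : (nhdsWithin a (Set.Ioc a r₀)).NeBot :=
        mem_closure_iff_nhdsWithin_neBot.mp hac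
      have h1 : Tendsto (fun t => ψ t * t) (nhdsWithin a (Set.Ioc a r₀)) (nhds (ψ a * a)) :=
        (((hψc.continuousAt (Ioi_mem_nhds ha0)).mul continuousAt_id)).continuousWithinAt
      have h2 : Tendsto (fun t => ψ t * t) (nhdsWithin a (Set.Ioc a r₀)) (nhds (ψ r₀ * r₀)) :=
        tendsto_const_nhds.congr' (eventuallyEq_nhdsWithin_of_eqOn (fun t ht => (hkey t ht).symm))
      have haeq : ψ a * a = ψ r₀ * r₀ := tendsto_nhds_unique h1 h2
      have hψa : ψ a = 0 := by rw [hψdef]; simp [hφa]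
      rw [hψa, zero_mul] at haeq
      linarith [hc₂, haeq]
    · have hnozero : ∀ x : ℝ, 0 < x → x ≤ r₀ → φ x ≠ 0 := by
        intro x hx1 hx2 h0; exact hW ⟨x, hx1, hx2, h0⟩
      have hkey : ∀ t ∈ Set.Ioc (0:ℝ) r₀, ψ t * t = ψ r₀ * r₀ := by
        intro t ht
        have hnz : ∀ x ∈ Set.Icc t r₀, φ x ≠ 0 :=
          fun x hx => hnozero x (lt_of_lt_of_le ht.1 hx.1) hx.2
        have hposI : ∀ x ∈ Set.Icc t r₀, 0 < φ x :=
          fun x hx => possub t r₀ ht.1 hnz r₀ ⟨ht.2, le_refl _⟩ x hx hpos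
        exact constL t ht.1 ht.2 hposI hminus
      have houter : ContinuousAt (fun y : ℝ => Real.sin y / (1 + Real.cos y)) 0 :=
        ContinuousAt.div (Real.continuous_sin.continuousAt)
          ((continuous_const.add Real.continuous_cos).continuousAt) (by norm_num)
      have hψ0 : Tendsto (fun t => ψ t) (nhdsWithin 0 (Set.Ioi 0)) (nhds 0) := by
        have := houter.tendsto.comp hlim0
        simpa [hψdef, Function.comp_def] using this
      have hid0 : Tendsto (fun t : ℝ => t) (nhdsWithin 0 (Set.Ioi 0)) (nhds 0) :=
        (continuous_id.tendsto 0).mono_left nhdsWithin_le_nhds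
      have h1 : Tendsto (fun t => ψ t * t) (nhdsWithin 0 (Set.Ioi 0)) (nhds 0) := by
        have := hψ0.mul hid0
        simpa using this
      have h2 : Tendsto (fun t => ψ t * t) (nhdsWithin 0 (Set.Ioi 0)) (nhds (ψ r₀ * r₀)) := by
        refine tendsto_const_nhds.congr' ?_
        filter_upwards [Ioc_mem_nhdsGT_of_mem (Set.mem_Ico.mpr ⟨le_refl (0:ℝ), hr₀⟩)] with t ht
        exact (hkey t ht).symm
      have := tendsto_nhds_unique h1 h2
      linarith [hc₂, this]

theorem confined_finite_energy_harmonic_map_is_zero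
    (φ : ℝ → ℝ)
    (hbdd : ∃ K : ℝ, ∀ r ∈ Set.Ioi (0:ℝ), |φ r| ≤ K)
    (hsm : ContDiffOn ℝ 2 φ (Set.Ioi 0))
    (hode : ∀ r : ℝ, 0 < r →
      deriv (deriv φ) r + deriv φ r / r
        - Real.sin (φ r) * Real.cos (φ r) / r ^ 2 = 0)
    (hlim0 : Tendsto φ (nhdsWithin 0 (Set.Ioi 0)) (nhds 0))
    (henergy : IntegrableOn
      (fun r => ((deriv φ r) ^ 2 + Real.sin (φ r) ^ 2 / r ^ 2) * r) (Set.Ioi 0))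
    (hconf : ∀ r : ℝ, 0 < r → |φ r| ≤ Real.pi / 2) :
    ∀ r : ℝ, 0 < r → φ r = 0 := by
  -- differentiability facts
  have hd1 : ∀ r ∈ Set.Ioi (0:ℝ), HasDerivAt φ (deriv φ r) r := by
    intro r hr
    exact ((hsm.differentiableOn two_ne_zero).differentiableAt
      (isOpen_Ioi.mem_nhds hr)).hasDerivAt
  have hsm1 : ContDiffOn ℝ 1 (deriv φ) (Set.Ioi 0) :=
    hsm.deriv_of_isOpen isOpen_Ioi (by norm_num)
  have hd2 : ∀ r ∈ Set.Ioi (0:ℝ), HasDerivAt (deriv φ) (deriv (deriv φ) r) r := by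
    intro r hr
    exact ((hsm1.differentiableOn one_ne_zero).differentiableAt
      (isOpen_Ioi.mem_nhds hr)).hasDerivAt
  have hcd : ContinuousOn (deriv φ) (Set.Ioi 0) :=
    hsm.continuousOn_deriv_of_isOpen isOpen_Ioi one_le_two
  -- the conserved quantity F
  set F : ℝ → ℝ := fun r => (r * deriv φ r) ^ 2 - Real.sin (φ r) ^ 2 with hFdef
  have hF : ∀ r ∈ Set.Ioi (0:ℝ), HasDerivAt F 0 r := by
    intro r hr
    have hr0 : 0 < r := hr
    have h1 : HasDerivAt (fun x => x * deriv φ x)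
        (1 * deriv φ r + r * deriv (deriv φ) r) r :=
      (hasDerivAt_id r).mul (hd2 r hr)
    have h2 : HasDerivAt (fun x => (x * deriv φ x) ^ 2)
        (2 * (r * deriv φ r) ^ 1 * (1 * deriv φ r + r * deriv (deriv φ) r)) r := h1.pow 2
    have h3 : HasDerivAt (fun x => Real.sin (φ x)) (Real.cos (φ r) * deriv φ r) r :=
      (Real.hasDerivAt_sin (φ r)).comp r (hd1 r hr)
    have h4 : HasDerivAt (fun x => Real.sin (φ x) ^ 2)
        (2 * Real.sin (φ r) ^ 1 * (Real.cos (φ r) * deriv φ r)) r := h3.pow 2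
    have h5 := h2.sub h4
    convert h5 using 1
    rfl
    rfl
    rfl
    have hode' : deriv (deriv φ) r
        = Real.sin (φ r) * Real.cos (φ r) / r ^ 2 - deriv φ r / r := by
      have := hode r hr0
      linarith
    rw [hode']
    field_simp
    ring
  -- F is constant
  have hFconst : ∀ r ∈ Set.Ioi (0:ℝ), F r = F 1 := by
    have key : ∀ s t : ℝ, 0 < s → s ≤ t → F t = F s := by
      intro s t hs hst
      have hcont : ContinuousOn F (Set.Icc s t) := fun x hx =>
        ((hF x (Set.mem_Ioi.mpr (lt_of_lt_of_le hs hx.1))).continuousAt).continuousWithinAt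
      exact constant_of_has_deriv_right_zero hcont
        (fun x hx => (hF x (Set.mem_Ioi.mpr
          (lt_of_lt_of_le hs hx.1))).hasDerivWithinAt) t (Set.right_mem_Icc.mpr hst)
    intro r hr
    have hr0 : 0 < r := hr
    rcases le_total r 1 with h | h
    · exact (key r 1 hr0 h).symm
    · exact key 1 r one_pos h
  -- the constant is zero by finite energy
  have hc0 : F 1 = 0 := by
    by_contra hc
    set c := F 1 with hcdef
    have hcpos : 0 < |c| := abs_pos.mpr hc
    have hInt : IntegrableOn
        (fun r => ((deriv φ r) ^ 2 + Real.sin (φ r) ^ 2 / r ^ 2) * r) (Set.Ioi 1) :=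
      henergy.mono_set (Set.Ioi_subset_Ioi zero_le_one)
    have hbound : ∀ r : ℝ, 1 < r →
        |c| * r⁻¹ ≤ ((deriv φ r) ^ 2 + Real.sin (φ r) ^ 2 / r ^ 2) * r := by
      intro r hr
      have hr0 : 0 < r := lt_trans one_pos hr
      have hFr : (r * deriv φ r) ^ 2 - Real.sin (φ r) ^ 2 = c := hFconst r hr0
      have h1 : |c| ≤ (r * deriv φ r) ^ 2 + Real.sin (φ r) ^ 2 := by
        rw [← hFr]
        have := abs_sub_abs_le_abs_sub ((r * deriv φ r) ^ 2) (Real.sin (φ r) ^ 2)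
        rcases abs_cases ((r * deriv φ r) ^ 2 - Real.sin (φ r) ^ 2) with ⟨h, _⟩ | ⟨h, _⟩ <;>
          nlinarith [sq_nonneg (r * deriv φ r), sq_nonneg (Real.sin (φ r))]
      have heq : ((deriv φ r) ^ 2 + Real.sin (φ r) ^ 2 / r ^ 2) * r
          = ((r * deriv φ r) ^ 2 + Real.sin (φ r) ^ 2) * r⁻¹ := by
        field_simp
      rw [heq]
      exact mul_le_mul_of_nonneg_right h1 (inv_nonneg.mpr (le_of_lt hr0))
    have hgInt : IntegrableOn (fun r : ℝ => |c| * r⁻¹) (Set.Ioi 1) := by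
      refine hInt.mono' ((measurable_const.mul measurable_inv).aestronglyMeasurable) ?_
      rw [ae_restrict_iff' measurableSet_Ioi]
      filter_upwards with r hr
      have hr0 : 0 < r := lt_trans one_pos hr
      rw [Real.norm_eq_abs, abs_of_nonneg (mul_nonneg (abs_nonneg c)
        (inv_nonneg.mpr (le_of_lt hr0)))]
      exact hbound r hr
    have hinvInt : IntegrableOn (fun r : ℝ => r⁻¹) (Set.Ioi 1) := by
      have h2 := hgInt.const_mul |c|⁻¹
      have heq : (fun x : ℝ => |c|⁻¹ * (|c| * x⁻¹)) = fun x : ℝ => x⁻¹ := by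
        funext x
        rw [← mul_assoc, inv_mul_cancel₀ (abs_ne_zero.mpr hc), one_mul]
      rwa [heq] at h2
    have : IntegrableOn (fun r : ℝ => r ^ (-1 : ℝ)) (Set.Ioi 1) := by
      have heq : (fun r : ℝ => r ^ (-1 : ℝ)) = fun r : ℝ => r⁻¹ := by
        funext x
        rw [Real.rpow_neg_one]
      rwa [heq]
    have := (integrableOn_Ioi_rpow_iff one_pos).mp this
    linarith
  -- pointwise identity
  have hid : ∀ r ∈ Set.Ioi (0:ℝ), (r * deriv φ r) ^ 2 = Real.sin (φ r) ^ 2 := by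
    intro r hr
    have := hFconst r hr
    rw [hc0] at this
    have : (r * deriv φ r) ^ 2 - Real.sin (φ r) ^ 2 = 0 := this
    linarith
  -- conclude using the auxiliary lemma applied to φ and -φ
  intro r hr
  by_contra h0
  rcases lt_or_gt_of_ne h0 with hneg | hpos
  · -- apply aux to -φ
    have hd1' : ∀ s ∈ Set.Ioi (0:ℝ), HasDerivAt (fun x => -φ x) (deriv (fun x => -φ x) s) s := by
      intro s hs
      have hds : deriv (fun x => -φ x) s = -(deriv φ s) := deriv.neg
      rw [hds]
      exact (hd1 s hs).neg
    have hcd' : ContinuousOn (deriv (fun x => -φ x)) (Set.Ioi 0) := by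
      have : deriv (fun x => -φ x) = fun x => -(deriv φ x) := funext fun x => deriv.neg
      rw [this]
      exact hcd.neg
    have hid' : ∀ s ∈ Set.Ioi (0:ℝ),
        (s * deriv (fun x => -φ x) s) ^ 2 = Real.sin ((fun x => -φ x) s) ^ 2 := by
      intro s hs
      have hds : deriv (fun x => -φ x) s = -(deriv φ s) := deriv.neg
      simp only [hds, Real.sin_neg]
      rw [mul_neg, neg_sq, neg_sq]
      exact hid s hs
    have hlim0' : Tendsto (fun x => -φ x) (nhdsWithin 0 (Set.Ioi 0)) (nhds 0) := by
      have := hlim0.neg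
      simpa using this
    have hconf' : ∀ s : ℝ, 0 < s → |(fun x => -φ x) s| ≤ Real.pi / 2 := by
      intro s hs
      simpa [abs_neg] using hconf s hs
    exact hm_aux (fun x => -φ x) hd1' hcd' hid' hlim0' hconf' r hr (by simpa using hneg)
  · exact hm_aux φ hd1 hcd hid hlim0 hconf r hr hpos
end
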